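/- arXiv:0907.1540 — 2 statements merged into one kernel-verified Lean document; each statement's English description precedes it below -/
import Mathlib

section
/- In the algebra CSP_p, external choice distributes over probabilistic choice up to probabilistic ready trace equivalence: Σ_{i∈I} aᵢ.(⊕_{j∈J} πⱼ x_{ij}) ≈_O ⊕_{j∈J} πⱼ (Σ_{i∈I} aᵢ.x_{ij}). -/
inductive Proc (A : Type) where
  | nd : List (A × Proc A) → Proc A
  | pr : List (ℝ × Proc A) → Proc A

namespace Proc

variable {A : Type} [DecidableEq A]

/-- The menu of a nondeterministic state: the set of initially enabled actions. -/
def menu : Proc A → Finset A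
  | nd l => (l.map Prod.fst).toFinset
  | pr _ => ∅

/-- Deterministic action transition. -/
def step : Proc A → A → Option (Proc A)
  | nd l, a => (l.find? (fun x => x.1 = a)).map Prod.snd
  | pr _, _ => none

/-- P¹ₛ(M) : the probability that the initial menu observed is M. -/
noncomputable def P1 : Proc A → Finset A → ℝ
  | nd l, M => if (l.map Prod.fst).toFinset = M then 1 else 0
  | pr l, M => (l.attach.map (fun x => x.1.1 * P1 x.1.2 M)).sum
termination_by p _ => sizeOf p
decreasing_by
  obtain ⟨⟨r, p⟩, hmem⟩ := x
  have h := List.sizeOf_lt_of_mem hmem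
  simp at h ⊢
  omega

end Proc
/-- Flattening used when a probabilistic transition would lead to a probabilistic state. -/
def flat {A : Type} (w : ℝ) : Proc A → List (ℝ × Proc A)
  | Proc.pr l => l.map (fun x => (w * x.1, x.2))
  | q => [(w, q)]

namespace Proc

variable {A : Type} [DecidableEq A]

/-- The derived process s_{(M,a)} : the process that `s` becomes, given that the
menu `M` was offered and the action `a ∈ M` was performed. -/
noncomputable def after : Proc A → Finset A → A → Option (Proc A)
  | nd l, M, a => if (l.map Prod.fst).toFinset = M then step (nd l) a else none
  | pr l, M, a =>
      let sel := l.filter (fun x => x.2.menu = M)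
      let tot := (sel.map Prod.fst).sum
      let entries := sel.flatMap (fun x =>
        match x.2.step a with
        | none => []
        | some q => flat (x.1 / tot) q)
      if entries.isEmpty then none else some (pr entries)

/-- The conditional ready-trace probability
`P_sⁿ(M | M₁,a₁,…,a_{n-1})`, where `none` represents undefinedness. -/
noncomputable def Pn : Proc A → List (Finset A × A) → Finset A → Option ℝ
  | s, [], M => some (P1 s M)
  | s, Ma :: rest, M =>
      if 0 < P1 s Ma.1 then (after s Ma.1 Ma.2).bind (fun s' => Pn s' rest M)
      else none

/-- Probabilistic ready trace equivalence `≈_O`. -/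
noncomputable def RTEquiv (s t : Proc A) : Prop :=
  ∀ (tr : List (Finset A × A)) (M : Finset A), Pn s tr M = Pn t tr M

/-- Well-formed process graphs: action-deterministic menus, probabilities in (0,1]
summing to one, and probabilistic transitions leading to nondeterministic states. -/
inductive WF : Proc A → Prop
  | nd (l : List (A × Proc A)) :
      (l.map Prod.fst).Nodup → (∀ x ∈ l, WF x.2) → WF (.nd l)
  | pr (l : List (ℝ × Proc A)) :
      (∀ x ∈ l, 0 < x.1 ∧ x.1 ≤ 1 ∧ ∃ l', x.2 = Proc.nd l') →
      (l.map Prod.fst).sum = 1 →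
      (∀ x ∈ l, WF x.2) → WF (.pr l)

end Proc
/-- Syntax of the algebra CSP_p: empty process, action-guarded external choice,
probabilistic choice, priority, lock-step parallel and parallel with
synchronization set L. -/
inductive CSPp (A : Type) where
  | delta : CSPp A
  | ext : List (A × CSPp A) → CSPp A
  | prob : List (ℝ × CSPp A) → CSPp A
  | theta : CSPp A → CSPp A
  | par : CSPp A → CSPp A → CSPp A
  | parL : Finset A → CSPp A → CSPp A → CSPp A

namespace Proc

variable {A : Type} [DecidableEq A]

/-- Flattening of a probabilistic branch, so that probabilistic transitions
lead to nondeterministic states. -/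
def pflat (x : ℝ × Proc A) : List (ℝ × Proc A) :=
  match x.2 with
  | .pr l' => l'.map (fun z => (x.1 * z.1, z.2))
  | q => [(x.1, q)]

variable [LT A] [DecidableRel ((· < ·) : A → A → Prop)]

/-- The list of branches of a menu that have maximal priority. -/
def maxBranches (l : List (A × Proc A)) : List (A × Proc A) :=
  l.filter (fun x => decide (¬ ∃ y ∈ l, x.1 < y.1))

/-- The priority operator Θ on process graphs: keep only the maximal-priority
actions of each menu. -/
inductive ThetaRel : Proc A → Proc A → Prop
  | nd (l m : List (A × Proc A)) :
      m.length = (maxBranches l).length →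
      (∀ i (hi : i < (maxBranches l).length) (hi' : i < m.length),
        (m.get ⟨i, hi'⟩).1 = ((maxBranches l).get ⟨i, hi⟩).1) →
      (∀ i (hi : i < (maxBranches l).length) (hi' : i < m.length),
        ThetaRel ((maxBranches l).get ⟨i, hi⟩).2 (m.get ⟨i, hi'⟩).2) →
      ThetaRel (.nd l) (.nd m)
  | pr (l m : List (ℝ × Proc A)) :
      m.length = l.length →
      (∀ i (hi : i < l.length) (hi' : i < m.length),
        (m.get ⟨i, hi'⟩).1 = (l.get ⟨i, hi⟩).1) →
      (∀ i (hi : i < l.length) (hi' : i < m.length),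
        ThetaRel (l.get ⟨i, hi⟩).2 (m.get ⟨i, hi'⟩).2) →
      ThetaRel (.pr l) (.pr m)

/-- The branches of `l` whose action is in `L` and can be matched by the menu `l'`. -/
def syncBranches (L : Finset A) (l l' : List (A × Proc A)) : List (A × Proc A) :=
  l.filter (fun x => decide (x.1 ∈ L) && (Proc.step (.nd l') x.1).isSome)

/-- The branches of `l` whose action is interleaved (not in `L`). -/
def freeBranches (L : Finset A) (l : List (A × Proc A)) : List (A × Proc A) :=
  l.filter (fun x => decide (x.1 ∉ L))

/-- `ParRel L p q r` : `r` is the parallel composition of `p` and `q` that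
synchronizes on the actions in `L` and interleaves all other actions. -/
inductive ParRel (L : Finset A) : Proc A → Proc A → Proc A → Prop
  | ndnd (l l' : List (A × Proc A)) (m₁ m₂ m₃ : List (A × Proc A)) :
      m₁.length = (syncBranches L l l').length →
      (∀ i (hi : i < (syncBranches L l l').length) (hi' : i < m₁.length),
        (m₁.get ⟨i, hi'⟩).1 = ((syncBranches L l l').get ⟨i, hi⟩).1) →
      (∀ i (hi : i < (syncBranches L l l').length) (hi' : i < m₁.length) q',
        Proc.step (.nd l') ((syncBranches L l l').get ⟨i, hi⟩).1 = some q' →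
        ParRel L ((syncBranches L l l').get ⟨i, hi⟩).2 q' (m₁.get ⟨i, hi'⟩).2) →
      m₂.length = (freeBranches L l).length →
      (∀ i (hi : i < (freeBranches L l).length) (hi' : i < m₂.length),
        (m₂.get ⟨i, hi'⟩).1 = ((freeBranches L l).get ⟨i, hi⟩).1) →
      (∀ i (hi : i < (freeBranches L l).length) (hi' : i < m₂.length),
        ParRel L ((freeBranches L l).get ⟨i, hi⟩).2 (.nd l') (m₂.get ⟨i, hi'⟩).2) →
      m₃.length = (freeBranches L l').length →
      (∀ i (hi : i < (freeBranches L l').length) (hi' : i < m₃.length),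
        (m₃.get ⟨i, hi'⟩).1 = ((freeBranches L l').get ⟨i, hi⟩).1) →
      (∀ i (hi : i < (freeBranches L l').length) (hi' : i < m₃.length),
        ParRel L (.nd l) ((freeBranches L l').get ⟨i, hi⟩).2 (m₃.get ⟨i, hi'⟩).2) →
      ParRel L (.nd l) (.nd l') (.nd (m₁ ++ m₂ ++ m₃))
  | prnd (l : List (ℝ × Proc A)) (q : Proc A) (m : List (ℝ × Proc A)) :
      (∀ l', q ≠ .pr l') →
      m.length = l.length →
      (∀ i (hi : i < l.length) (hi' : i < m.length),
        (m.get ⟨i, hi'⟩).1 = (l.get ⟨i, hi⟩).1) →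
      (∀ i (hi : i < l.length) (hi' : i < m.length),
        ParRel L (l.get ⟨i, hi⟩).2 q (m.get ⟨i, hi'⟩).2) →
      ParRel L (.pr l) q (.pr m)
  | ndpr (q : Proc A) (l' : List (ℝ × Proc A)) (m : List (ℝ × Proc A)) :
      (∀ l'', q ≠ .pr l'') →
      m.length = l'.length →
      (∀ i (hi : i < l'.length) (hi' : i < m.length),
        (m.get ⟨i, hi'⟩).1 = (l'.get ⟨i, hi⟩).1) →
      (∀ i (hi : i < l'.length) (hi' : i < m.length),
        ParRel L q (l'.get ⟨i, hi⟩).2 (m.get ⟨i, hi'⟩).2) →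
      ParRel L q (.pr l') (.pr m)
  | prpr (l l' : List (ℝ × Proc A)) (m : List (ℝ × Proc A)) :
      m.length = (l.flatMap (fun x => l'.map (fun x' => (x, x')))).length →
      (∀ i (hi : i < (l.flatMap (fun x => l'.map (fun x' => (x, x')))).length)
          (hi' : i < m.length),
        (m.get ⟨i, hi'⟩).1 =
          ((l.flatMap (fun x => l'.map (fun x' => (x, x')))).get ⟨i, hi⟩).1.1 *
          ((l.flatMap (fun x => l'.map (fun x' => (x, x')))).get ⟨i, hi⟩).2.1) →
      (∀ i (hi : i < (l.flatMap (fun x => l'.map (fun x' => (x, x')))).length)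
          (hi' : i < m.length),
        ParRel L ((l.flatMap (fun x => l'.map (fun x' => (x, x')))).get ⟨i, hi⟩).1.2
          ((l.flatMap (fun x => l'.map (fun x' => (x, x')))).get ⟨i, hi⟩).2.2
          (m.get ⟨i, hi'⟩).2) →
      ParRel L (.pr l) (.pr l') (.pr m)

variable [Fintype A]

/-- `Den p q` : the process graph `q` is the operational-semantics denotation of
the CSP_p term `p` (per the SOS rules of the paper). -/
inductive Den : CSPp A → Proc A → Prop
  | delta : Den .delta (.nd [])
  | ext (l : List (A × CSPp A)) (m : List (A × Proc A)) :
      m.length = l.length →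
      (∀ i (hi : i < l.length) (hi' : i < m.length),
        (m.get ⟨i, hi'⟩).1 = (l.get ⟨i, hi⟩).1) →
      (∀ i (hi : i < l.length) (hi' : i < m.length),
        Den (l.get ⟨i, hi⟩).2 (m.get ⟨i, hi'⟩).2) →
      Den (.ext l) (.nd m)
  | prob (l : List (ℝ × CSPp A)) (m : List (ℝ × Proc A)) :
      m.length = l.length →
      (∀ i (hi : i < l.length) (hi' : i < m.length),
        (m.get ⟨i, hi'⟩).1 = (l.get ⟨i, hi⟩).1) →
      (∀ i (hi : i < l.length) (hi' : i < m.length),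
        Den (l.get ⟨i, hi⟩).2 (m.get ⟨i, hi'⟩).2) →
      Den (.prob l) (.pr (m.flatMap pflat))
  | theta (p : CSPp A) (q q' : Proc A) :
      Den p q → ThetaRel q q' → Den (.theta p) q'
  | par (p₁ p₂ : CSPp A) (q₁ q₂ r : Proc A) :
      Den p₁ q₁ → Den p₂ q₂ → ParRel Finset.univ q₁ q₂ r → Den (.par p₁ p₂) r
  | parL (L : Finset A) (p₁ p₂ : CSPp A) (q₁ q₂ r : Proc A) :
      Den p₁ q₁ → Den p₂ q₂ → ParRel L q₁ q₂ r → Den (.parL L p₁ p₂) r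

/-- Probabilistic ready trace equivalence `≈_O` on CSP_p terms. -/
def CSPEquiv (s t : CSPp A) : Prop :=
  ∀ ps pt : Proc A, Den s ps → Den t pt → RTEquiv ps pt

end Proc

namespace CSPp

variable {A : Type}

/-- Well-formed CSP_p terms: distinct actions in external choices and
probabilities in (0,1] summing to one in probabilistic choices. -/
inductive WFt : CSPp A → Prop
  | delta : WFt .delta
  | ext (l : List (A × CSPp A)) :
      (l.map Prod.fst).Nodup → (∀ x ∈ l, WFt x.2) → WFt (.ext l)
  | prob (l : List (ℝ × CSPp A)) :
      (∀ x ∈ l, 0 < x.1 ∧ x.1 ≤ 1) → (l.map Prod.fst).sum = 1 →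
      (∀ x ∈ l, WFt x.2) → WFt (.prob l)
  | theta (p : CSPp A) : WFt p → WFt (.theta p)
  | par (p q : CSPp A) : WFt p → WFt q → WFt (.par p q)
  | parL (L : Finset A) (p q : CSPp A) : WFt p → WFt q → WFt (.parL L p q)

end CSPp

/-!
Both terms offer the menu `{aᵢ}` with probability one, and after `aᵢ` both continue as the
mixture `⊕ⱼ πⱼ x_{ij}`: the left term directly, the right one by conditioning its mixture on the
observed menu, which changes nothing because every branch offers that same menu. Hence the
ready-trace probabilities agree at the first step and the continuations are identical. This needs
the denotations of the `x_{ij}` inside the two terms to be the same graphs, which holds because the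
semantics is functional, and it needs no `x_{ij}` to denote an empty probabilistic choice (excluded
by well-formedness), since conditioning would turn that into an undefined continuation.
-/

namespace List

variable {α β γ : Type*}

theorem eq_of_get_fst_eq_of_get_snd_eq {l : List γ} {m m' : List (α × β)}
    (hlen : m.length = l.length) (hlen' : m'.length = l.length)
    (hfst : ∀ i, i < l.length → ∀ (h : i < m.length) (h' : i < m'.length),
      (m.get ⟨i, h⟩).1 = (m'.get ⟨i, h'⟩).1)
    (hsnd : ∀ i, i < l.length → ∀ (h : i < m.length) (h' : i < m'.length),
      (m.get ⟨i, h⟩).2 = (m'.get ⟨i, h'⟩).2) :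
    m = m' :=
  List.ext_get (hlen.trans hlen'.symm) fun i h h' =>
    Prod.ext (hfst i (hlen ▸ h) h h') (hsnd i (hlen ▸ h) h h')

theorem exists_eq_ofFn_of_get {n : ℕ} {f : Fin n → α × γ} {m : List (α × β)}
    {R : γ → β → Prop} (hlen : m.length = (ofFn f).length)
    (hfst : ∀ i (hi : i < (ofFn f).length) (hi' : i < m.length),
      (m.get ⟨i, hi'⟩).1 = ((ofFn f).get ⟨i, hi⟩).1)
    (hsnd : ∀ i (hi : i < (ofFn f).length) (hi' : i < m.length),
      R ((ofFn f).get ⟨i, hi⟩).2 (m.get ⟨i, hi'⟩).2) :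
    ∃ g : Fin n → β, (∀ i, R (f i).2 (g i)) ∧ m = ofFn fun i => ((f i).1, g i) := by
  have hm : m.length = n := by simpa using hlen
  refine ⟨fun i => (m.get ⟨i, hm ▸ i.2⟩).2, fun i => by simpa using hsnd i (by simp) _, ?_⟩
  refine List.ext_get (by simp [hm]) fun i h h' => Prod.ext ?_ ?_
  · simpa using hfst i (by simpa [hm] using h) h
  · simp

theorem map_fst_ofFn {n : ℕ} (a : Fin n → α) (b : Fin n → β) :
    (ofFn fun i => (a i, b i)).map Prod.fst = ofFn a := by
  simp [map_ofFn, Function.comp_def]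

theorem sum_map_fst_ofFn {M : Type*} [AddCommMonoid M] {n : ℕ} (a : Fin n → M)
    (b : Fin n → β) :
    ((ofFn fun i => (a i, b i)).map Prod.fst).sum = ∑ i, a i := by
  rw [map_fst_ofFn, sum_ofFn]

end List

namespace Proc

variable {A : Type}

theorem ThetaRel.unique [LT A] [DecidableRel ((· < ·) : A → A → Prop)] {p q : Proc A}
    (h : ThetaRel p q) {q' : Proc A} (h' : ThetaRel p q') : q = q' := by
  induction h generalizing q' with
  | nd l m hlen hfst _ ih =>
    cases h' with
    | nd _ _ hlen' hfst' hsnd' =>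
      exact congrArg Proc.nd <| List.eq_of_get_fst_eq_of_get_snd_eq hlen hlen'
        (fun i hi h h' => (hfst i hi h).trans (hfst' i hi h').symm)
        (fun i hi h h' => ih i hi h (hsnd' i hi h'))
  | pr l m hlen hfst _ ih =>
    cases h' with
    | pr _ _ hlen' hfst' hsnd' =>
      exact congrArg Proc.pr <| List.eq_of_get_fst_eq_of_get_snd_eq hlen hlen'
        (fun i hi h h' => (hfst i hi h).trans (hfst' i hi h').symm)
        (fun i hi h h' => ih i hi h (hsnd' i hi h'))

theorem ThetaRel.ne_pr_nil [LT A] [DecidableRel ((· < ·) : A → A → Prop)] {p q : Proc A}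
    (h : ThetaRel p q) (hp : p ≠ .pr []) : q ≠ .pr [] := by
  rintro rfl
  cases h with
  | pr l _ hlen => exact hp (by simpa [eq_comm] using hlen)

theorem pflat_eq_nil_iff {x : ℝ × Proc A} : pflat x = [] ↔ x.2 = .pr [] := by
  rcases x with ⟨r, _ | l⟩ <;> simp [pflat]

theorem pflat_eq_flat (x : ℝ × Proc A) : pflat x = flat x.1 x.2 := by
  rcases x with ⟨r, _ | l⟩ <;> rfl

theorem flatMap_pflat_eq_self {l : List (ℝ × Proc A)} (h : ∀ x ∈ l, ∃ l', x.2 = .nd l') :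
    l.flatMap pflat = l := by
  conv_rhs => rw [← List.flatMap_singleton' l]
  refine List.flatMap_congr fun x hx => ?_
  obtain ⟨l', hl'⟩ := h x hx
  rcases x with ⟨r, p⟩
  subst hl'
  rfl

section

variable [DecidableEq A]

theorem step_isSome_of_mem_syncBranches {L : Finset A} {l l' : List (A × Proc A)}
    {x : A × Proc A} (hx : x ∈ syncBranches L l l') : (step (.nd l') x.1).isSome := by
  simp only [syncBranches, List.mem_filter, Bool.and_eq_true, decide_eq_true_eq] at hx
  exact hx.2.2

theorem ParRel.unique {L : Finset A} {p q r : Proc A} (h : ParRel L p q r) {r' : Proc A}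
    (h' : ParRel L p q r') : r = r' := by
  induction h generalizing r' with
  | ndnd l l' m₁ m₂ m₃ h1len h1fst _ h2len h2fst _ h3len h3fst _ ih1 ih2 ih3 =>
    cases h' with
    | ndnd _ _ n₁ n₂ n₃ g1len g1fst g1snd g2len g2fst g2snd g3len g3fst g3snd =>
      have e₁ : m₁ = n₁ := List.eq_of_get_fst_eq_of_get_snd_eq h1len g1len
        (fun i hi h h' => (h1fst i hi h).trans (g1fst i hi h').symm) fun i hi h h' => by
          obtain ⟨q', hq'⟩ := Option.isSome_iff_exists.mp
            (step_isSome_of_mem_syncBranches (List.get_mem _ ⟨i, hi⟩))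
          exact ih1 i hi h q' hq' (g1snd i hi h' q' hq')
      have e₂ : m₂ = n₂ := List.eq_of_get_fst_eq_of_get_snd_eq h2len g2len
        (fun i hi h h' => (h2fst i hi h).trans (g2fst i hi h').symm)
        (fun i hi h h' => ih2 i hi h (g2snd i hi h'))
      have e₃ : m₃ = n₃ := List.eq_of_get_fst_eq_of_get_snd_eq h3len g3len
        (fun i hi h h' => (h3fst i hi h).trans (g3fst i hi h').symm)
        (fun i hi h h' => ih3 i hi h (g3snd i hi h'))
      rw [e₁, e₂, e₃]
  | prnd l q m hq hlen hfst _ ih =>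
    cases h' with
    | prnd _ _ _ _ hlen' hfst' hsnd' =>
      exact congrArg Proc.pr <| List.eq_of_get_fst_eq_of_get_snd_eq hlen hlen'
        (fun i hi h h' => (hfst i hi h).trans (hfst' i hi h').symm)
        (fun i hi h h' => ih i hi h (hsnd' i hi h'))
    | ndpr _ l' _ hq' => exact absurd rfl (hq' l)
    | prpr _ l' => exact absurd rfl (hq l')
  | ndpr q l' m hq hlen hfst _ ih =>
    cases h' with
    | ndpr _ _ _ _ hlen' hfst' hsnd' =>
      exact congrArg Proc.pr <| List.eq_of_get_fst_eq_of_get_snd_eq hlen hlen'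
        (fun i hi h h' => (hfst i hi h).trans (hfst' i hi h').symm)
        (fun i hi h h' => ih i hi h (hsnd' i hi h'))
    | prnd _ _ _ hq' => exact absurd rfl (hq' l')
    | prpr l _ => exact absurd rfl (hq l)
  | prpr l l' m hlen hfst _ ih =>
    cases h' with
    | prpr _ _ _ hlen' hfst' hsnd' =>
      exact congrArg Proc.pr <| List.eq_of_get_fst_eq_of_get_snd_eq hlen hlen'
        (fun i hi h h' => (hfst i hi h).trans (hfst' i hi h').symm)
        (fun i hi h h' => ih i hi h (hsnd' i hi h'))
    | prnd _ _ _ hq' => exact absurd rfl (hq' l')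
    | ndpr _ _ _ hq' => exact absurd rfl (hq' l)

theorem ParRel.ne_pr_nil {L : Finset A} {p q r : Proc A} (h : ParRel L p q r)
    (hp : p ≠ .pr []) (hq : q ≠ .pr []) : r ≠ .pr [] := by
  rintro rfl
  cases h with
  | prnd l _ _ _ hlen => exact hp (by simpa [eq_comm] using hlen)
  | ndpr _ l _ _ hlen => exact hq (by simpa [eq_comm] using hlen)
  | prpr l l' _ hlen =>
    rcases l with _ | ⟨x, l⟩
    · exact hp rfl
    rcases l' with _ | ⟨x', l'⟩
    · exact hq rfl
    simp at hlen

theorem P1_nd (l : List (A × Proc A)) (M : Finset A) :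
    P1 (.nd l) M = if (l.map Prod.fst).toFinset = M then 1 else 0 := by
  rw [P1]

theorem P1_pr (l : List (ℝ × Proc A)) (M : Finset A) :
    P1 (.pr l) M = (l.map fun x => x.1 * P1 x.2 M).sum := by
  rw [P1, ← List.attach_map_val (l := l) (f := fun x => x.1 * P1 x.2 M)]

theorem after_pr_of_forall_menu_eq {l : List (ℝ × Proc A)} {M : Finset A}
    (hmenu : ∀ x ∈ l, x.2.menu = M) (htot : (l.map Prod.fst).sum = 1) {b : A}
    {e : List (ℝ × Proc A)} (he : l.flatMap (fun x => (x.2.step b).elim [] (flat x.1)) = e) :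
    after (.pr l) M b = if e = [] then none else some (.pr e) := by
  have hsel : l.filter (fun x => x.2.menu = M) = l := List.filter_eq_self.mpr (by simpa using hmenu)
  have hentry : (fun x : ℝ × Proc A => match x.2.step b with
      | none => []
      | some q => flat (x.1 / 1) q) = fun x => (x.2.step b).elim [] (flat x.1) := by
    funext x
    cases x.2.step b <;> simp
  simp only [after, hsel, htot, hentry, he, List.isEmpty_iff]

theorem rtEquiv_of_P1_eq_of_after_eq {s t : Proc A} (hP1 : ∀ M, P1 s M = P1 t M)
    (hafter : ∀ M b, 0 < P1 s M → after s M b = after t M b) : RTEquiv s t := by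
  rintro (_ | ⟨⟨M', b⟩, tr⟩) M
  · simp [Pn, hP1]
  · by_cases h : 0 < P1 s M'
    · simp [Pn, h, ← hP1, hafter M' b h]
    · simp [Pn, h, ← hP1]

theorem step_ofFn_apply {n : ℕ} {a : Fin n → A} (ha : Function.Injective a)
    (v : Fin n → Proc A) (i : Fin n) :
    step (.nd (List.ofFn fun i => (a i, v i))) (a i) = some (v i) := by
  have hfind : (List.ofFn fun i => (a i, v i)).find? (fun x => x.1 = a i) = some (a i, v i) := by
    rw [List.find?_eq_some_iff_getElem]
    refine ⟨by simp, i, by simp, by simp, fun j hj => ?_⟩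
    simpa using ha.ne (Fin.ne_of_lt (show (⟨j, _⟩ : Fin n) < i from hj))
  simp [step, hfind]

theorem step_ofFn_of_notMem_range {n : ℕ} {a : Fin n → A} (v : Fin n → Proc A) {b : A}
    (hb : b ∉ Set.range a) : step (.nd (List.ofFn fun i => (a i, v i))) b = none := by
  simp only [step, Option.map_eq_none_iff, List.find?_eq_none, List.mem_ofFn]
  rintro _ ⟨i, rfl⟩
  simpa using fun h => hb ⟨i, h⟩

section

variable {I J : ℕ} {a : Fin I → A} {π : Fin J → ℝ}

theorem P1_nd_ofFn (v : Fin I → Proc A) (M : Finset A) :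
    P1 (.nd (List.ofFn fun i => (a i, v i))) M = if (List.ofFn a).toFinset = M then 1 else 0 := by
  rw [P1_nd, List.map_fst_ofFn]

theorem P1_pr_ofFn_nd (hsum : ∑ j, π j = 1) (q : Fin I → Fin J → Proc A) (M : Finset A) :
    P1 (.pr (List.ofFn fun j => (π j, .nd (List.ofFn fun i => (a i, q i j))))) M =
      if (List.ofFn a).toFinset = M then 1 else 0 := by
  simp only [P1_pr, List.map_ofFn, List.sum_ofFn, Function.comp_def, P1_nd_ofFn,
    ← Finset.sum_mul, hsum, one_mul]

theorem menu_eq_of_mem_ofFn_nd (q : Fin I → Fin J → Proc A) :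
    ∀ x ∈ List.ofFn (fun j => (π j, Proc.nd (List.ofFn fun i => (a i, q i j)))),
      x.2.menu = (List.ofFn a).toFinset := by
  simp [List.mem_ofFn, menu, Function.comp_def]

theorem after_nd_ofFn (v : Fin I → Proc A) (b : A) :
    after (.nd (List.ofFn fun i => (a i, v i))) (List.ofFn a).toFinset b =
      step (.nd (List.ofFn fun i => (a i, v i))) b := by
  rw [after, List.map_fst_ofFn, if_pos rfl]

theorem after_pr_ofFn_nd_apply (ha : Function.Injective a) (hsum : ∑ j, π j = 1)
    {q : Fin I → Fin J → Proc A} (hq : ∀ i j, q i j ≠ .pr []) (i : Fin I) :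
    after (.pr (List.ofFn fun j => (π j, .nd (List.ofFn fun i => (a i, q i j)))))
        (List.ofFn a).toFinset (a i) =
      some (.pr ((List.ofFn fun j => (π j, q i j)).flatMap pflat)) := by
  have hJ : 0 < J := Nat.pos_of_ne_zero fun h => by subst h; simp at hsum
  have hentries : ((List.ofFn fun j => (π j, Proc.nd (List.ofFn fun i => (a i, q i j)))).flatMap
      fun x : ℝ × Proc A => (x.2.step (a i)).elim [] (flat x.1)) =
      (List.ofFn fun j => (π j, q i j)).flatMap pflat := by
    simp only [List.flatMap_def, List.map_ofFn, Function.comp_def, step_ofFn_apply ha,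
      Option.elim_some, pflat_eq_flat]
  have hne : (List.ofFn fun j => (π j, q i j)).flatMap pflat ≠ [] := by
    rw [Ne, List.flatMap_eq_nil_iff, not_forall]
    exact ⟨(π ⟨0, hJ⟩, q i ⟨0, hJ⟩), by simpa [pflat_eq_nil_iff, hq] using ⟨_, rfl, rfl⟩⟩
  rw [after_pr_of_forall_menu_eq (menu_eq_of_mem_ofFn_nd q)
    (by rw [List.sum_map_fst_ofFn, hsum]) hentries, if_neg hne]

theorem after_pr_ofFn_nd_of_notMem_range (hsum : ∑ j, π j = 1) (q : Fin I → Fin J → Proc A)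
    {b : A} (hb : b ∉ Set.range a) :
    after (.pr (List.ofFn fun j => (π j, .nd (List.ofFn fun i => (a i, q i j)))))
      (List.ofFn a).toFinset b = none := by
  have hentries : ((List.ofFn fun j => (π j, Proc.nd (List.ofFn fun i => (a i, q i j)))).flatMap
      fun x : ℝ × Proc A => (x.2.step b).elim [] (flat x.1)) = [] := by
    simp [step_ofFn_of_notMem_range _ hb, List.flatMap_eq_nil_iff, List.mem_ofFn]
  rw [after_pr_of_forall_menu_eq (menu_eq_of_mem_ofFn_nd q)
    (by rw [List.sum_map_fst_ofFn, hsum]) hentries, if_pos rfl]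

theorem rtEquiv_nd_pr_swap (ha : Function.Injective a) (hsum : ∑ j, π j = 1)
    {q : Fin I → Fin J → Proc A} (hq : ∀ i j, q i j ≠ .pr []) :
    RTEquiv (.nd (List.ofFn fun i => (a i, .pr ((List.ofFn fun j => (π j, q i j)).flatMap pflat))))
      (.pr ((List.ofFn fun j => (π j, .nd (List.ofFn fun i => (a i, q i j)))).flatMap pflat)) := by
  rw [flatMap_pflat_eq_self (by simp [List.mem_ofFn])]
  refine rtEquiv_of_P1_eq_of_after_eq (fun M => by rw [P1_nd_ofFn, P1_pr_ofFn_nd hsum])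
    fun M b hM => ?_
  obtain rfl : (List.ofFn a).toFinset = M := by
    by_contra h
    simp [P1_nd_ofFn, h] at hM
  rw [after_nd_ofFn]
  by_cases hb : b ∈ Set.range a
  · obtain ⟨i, rfl⟩ := hb
    rw [step_ofFn_apply ha, after_pr_ofFn_nd_apply ha hsum hq]
  · rw [step_ofFn_of_notMem_range _ hb, after_pr_ofFn_nd_of_notMem_range hsum _ hb]

end

variable [LT A] [DecidableRel ((· < ·) : A → A → Prop)] [Fintype A]

theorem Den.unique {p : CSPp A} {q : Proc A} (h : Den p q) {q' : Proc A} (h' : Den p q') :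
    q = q' := by
  induction h generalizing q' with
  | delta => cases h'; rfl
  | ext l m hlen hfst _ ih =>
    cases h' with
    | ext _ _ hlen' hfst' hsnd' =>
      exact congrArg Proc.nd <| List.eq_of_get_fst_eq_of_get_snd_eq hlen hlen'
        (fun i hi h h' => (hfst i hi h).trans (hfst' i hi h').symm)
        (fun i hi h h' => ih i hi h (hsnd' i hi h'))
  | prob l m hlen hfst _ ih =>
    cases h' with
    | prob _ _ hlen' hfst' hsnd' =>
      rw [List.eq_of_get_fst_eq_of_get_snd_eq hlen hlen'
        (fun i hi h h' => (hfst i hi h).trans (hfst' i hi h').symm)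
        (fun i hi h h' => ih i hi h (hsnd' i hi h'))]
  | theta p q r _ hθ ih =>
    cases h' with
    | theta _ _ _ hden' hθ' => exact hθ.unique (ih hden' ▸ hθ')
  | par p₁ p₂ q₁ q₂ r _ _ hpar ih₁ ih₂ =>
    cases h' with
    | par _ _ _ _ _ h₁' h₂' hpar' => exact hpar.unique (ih₁ h₁' ▸ ih₂ h₂' ▸ hpar')
  | parL L p₁ p₂ q₁ q₂ r _ _ hpar ih₁ ih₂ =>
    cases h' with
    | parL _ _ _ _ _ _ h₁' h₂' hpar' => exact hpar.unique (ih₁ h₁' ▸ ih₂ h₂' ▸ hpar')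

theorem Den.ne_pr_nil {p : CSPp A} {q : Proc A} (h : Den p q) (hp : p.WFt) : q ≠ .pr [] := by
  induction h with
  | delta => simp
  | ext => simp
  | prob l m hlen _ _ ih =>
    cases hp with
    | prob _ _ hsum hwf =>
      have hl : 0 < l.length := List.length_pos_iff.mpr (by rintro rfl; simp at hsum)
      have hm : 0 < m.length := hlen ▸ hl
      have hm₀ : pflat (m.get ⟨0, hm⟩) ≠ [] :=
        pflat_eq_nil_iff.not.mpr (ih 0 hl hm (hwf _ (List.get_mem l ⟨0, hl⟩)))
      intro hnil
      exact hm₀ (List.flatMap_eq_nil_iff.mp (Proc.pr.inj hnil) _ (List.get_mem m _))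
  | theta _ _ _ _ hθ ih =>
    cases hp with
    | theta _ hwf => exact hθ.ne_pr_nil (ih hwf)
  | par _ _ _ _ _ _ _ hpar ih₁ ih₂ =>
    cases hp with
    | par _ _ hwf₁ hwf₂ => exact hpar.ne_pr_nil (ih₁ hwf₁) (ih₂ hwf₂)
  | parL _ _ _ _ _ _ _ _ hpar ih₁ ih₂ =>
    cases hp with
    | parL _ _ _ hwf₁ hwf₂ => exact hpar.ne_pr_nil (ih₁ hwf₁) (ih₂ hwf₂)

theorem Den.exists_of_ext_ofFn {n : ℕ} {f : Fin n → A × CSPp A} {ps : Proc A}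
    (h : Den (.ext (List.ofFn f)) ps) :
    ∃ g : Fin n → Proc A, (∀ i, Den (f i).2 (g i)) ∧
      ps = .nd (List.ofFn fun i => ((f i).1, g i)) := by
  cases h with
  | ext _ m hlen hfst hsnd =>
    obtain ⟨g, hg, rfl⟩ := List.exists_eq_ofFn_of_get hlen hfst hsnd
    exact ⟨g, hg, rfl⟩

theorem Den.exists_of_prob_ofFn {n : ℕ} {f : Fin n → ℝ × CSPp A} {ps : Proc A}
    (h : Den (.prob (List.ofFn f)) ps) :
    ∃ g : Fin n → Proc A, (∀ i, Den (f i).2 (g i)) ∧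
      ps = .pr ((List.ofFn fun i => ((f i).1, g i)).flatMap pflat) := by
  cases h with
  | prob _ m hlen hfst hsnd =>
    obtain ⟨g, hg, rfl⟩ := List.exists_eq_ofFn_of_get hlen hfst hsnd
    exact ⟨g, hg, rfl⟩

end

end Proc

theorem external_choice_distributes_over_prob_choice_general
    {A : Type} [DecidableEq A] [LT A]
    [DecidableRel ((· < ·) : A → A → Prop)] [Fintype A]
    {I J : ℕ} (a : Fin I → A) (ha : Function.Injective a)
    (π : Fin J → ℝ) (hsum : ∑ j, π j = 1)
    (x : Fin I → Fin J → CSPp A) (hx : ∀ i j, CSPp.WFt (x i j)) :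
    Proc.CSPEquiv
      (CSPp.ext (List.ofFn fun i =>
        (a i, CSPp.prob (List.ofFn fun j => (π j, x i j)))))
      (CSPp.prob (List.ofFn fun j =>
        (π j, CSPp.ext (List.ofFn fun i => (a i, x i j))))) := by
  intro ps pt hps hpt
  obtain ⟨g, hg, rfl⟩ := Proc.Den.exists_of_ext_ofFn hps
  choose q hq hgq using fun i => Proc.Den.exists_of_prob_ofFn (hg i)
  obtain ⟨h, hh, rfl⟩ := Proc.Den.exists_of_prob_ofFn hpt
  choose q' hq' hhq' using fun j => Proc.Den.exists_of_ext_ofFn (hh j)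
  have hqq' : ∀ i j, q' j i = q i j := fun i j => (hq' j i).unique (hq i j)
  simp only [hgq, hhq', hqq']
  exact Proc.rtEquiv_nd_pr_swap ha hsum fun i j => (hq i j).ne_pr_nil (hx i j)

/-- In CSP_p, external choice distributes over probabilistic choice up to
probabilistic ready trace equivalence:
`Σ_{i∈I} aᵢ.(⊕_{j∈J} πⱼ x_{ij}) ≈_O ⊕_{j∈J} πⱼ (Σ_{i∈I} aᵢ.x_{ij})`. -/
theorem external_choice_distributes_over_prob_choice
    {A : Type} [DecidableEq A] [LT A]
    [DecidableRel ((· < ·) : A → A → Prop)] [Fintype A]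
    {I J : ℕ} (a : Fin I → A) (ha : Function.Injective a)
    (π : Fin J → ℝ) (hπ : ∀ j, 0 < π j ∧ π j ≤ 1) (hsum : ∑ j, π j = 1)
    (x : Fin I → Fin J → CSPp A) (hx : ∀ i j, CSPp.WFt (x i j)) :
    Proc.CSPEquiv
      (CSPp.ext (List.ofFn fun i =>
        (a i, CSPp.prob (List.ofFn fun j => (π j, x i j)))))
      (CSPp.prob (List.ofFn fun j =>
        (π j, CSPp.ext (List.ofFn fun i => (a i, x i j))))) :=
  external_choice_distributes_over_prob_choice_general a ha π hsum x hx
end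

section
/- Let M₁, …, Mₙ be subsets of a family of menus and define, for a binary string w = i₁…iₙ, the intersection ∩ₖ Mₖ^{iₖ} where Mₖ^1 = Mₖ and Mₖ^0 = Mₖᶜ. If x_w are real (or rational-function) values indexed by binary strings of length n satisfying x_{u0v} + x_{u1v} = 0 for every decomposition and position, together with the equation Σ_w (a/(a + Σ_{k: wₖ=1} bₖ))·x_w = 0 where a, b₁,…,bₙ are distinct positive-degree irreducible pairwise coprime monomials, then x_w = 0 for all w. -/
/-!
The pair equations force `x w = (-1) ^ |w| • x 0`, so the first-row equation becomes
`x 0 * ∑_w (-1) ^ |w| * a / (a + ∑_{k ∈ w} bₖ) = 0`. The coefficient is a nonzero rational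
function: after clearing denominators, specializing every variable to `1` turns it into
`∑_k C(n, k) (-1) ^ k / (k + 1) = 1 / (n + 1)`.
-/

/-- The rational function given by the variable `a` (the synchronized action). -/
noncomputable def rfA (n : ℕ) : FractionRing (MvPolynomial (Fin (n + 1)) ℝ) :=
  algebraMap (MvPolynomial (Fin (n + 1)) ℝ) _ (MvPolynomial.X 0)

/-- The rational function given by the variable `bₖ`. -/
noncomputable def rfB (n : ℕ) (k : Fin n) :
    FractionRing (MvPolynomial (Fin (n + 1)) ℝ) :=
  algebraMap (MvPolynomial (Fin (n + 1)) ℝ) _ (MvPolynomial.X k.succ)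

open Finset

theorem Finset.sum_choose_mul_neg_one_pow_div {K : Type*} [Field K] [CharZero K] (n : ℕ) :
    ∑ k ∈ range (n + 1), (n.choose k : K) * (-1) ^ k / (k + 1) = 1 / (n + 1) := by
  have halt : ∑ k ∈ range (n + 1), (-1 : ℤ) ^ (k + 1) * (n + 1).choose (k + 1) = -1 := by
    have := Int.alternating_sum_range_choose_of_ne n.succ_ne_zero
    rw [sum_range_succ'] at this
    simpa [add_eq_zero_iff_eq_neg] using this
  rw [eq_div_iff n.cast_add_one_ne_zero, sum_mul]
  calc ∑ k ∈ range (n + 1), (n.choose k : K) * (-1) ^ k / (k + 1) * (n + 1)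
      = ∑ k ∈ range (n + 1), -((-1) ^ (k + 1) * ((n + 1).choose (k + 1) : K)) := by
        refine sum_congr rfl fun k _ => ?_
        have h : ((n : K) + 1) * n.choose k = (n + 1).choose (k + 1) * (k + 1) := by
          exact_mod_cast Nat.add_one_mul_choose_eq n k
        rw [div_mul_eq_mul_div, div_eq_iff k.cast_add_one_ne_zero, pow_succ]
        linear_combination (-1 : K) ^ k * h
    _ = 1 := by rw [sum_neg_distrib]; exact_mod_cast congrArg Neg.neg halt

theorem Fintype.sum_boolFun_apply_card {ι M : Type*} [Fintype ι] [DecidableEq ι]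
    [AddCommMonoid M] (f : ℕ → M) :
    ∑ w : ι → Bool, f #{i | w i = true}
      = ∑ k ∈ range (Fintype.card ι + 1), (Fintype.card ι).choose k • f k := by
  rw [← card_univ, ← sum_powerset_apply_card, powerset_univ]
  exact sum_nbij' (fun w => univ.filter fun i => w i = true) (fun s i => decide (i ∈ s))
    (by simp) (by simp) (fun w _ => by funext i; simp) (fun s _ => by ext i; simp)
    (fun _ _ => rfl)

theorem Fintype.sum_boolFun_neg_one_pow_card_div {ι K : Type*} [Fintype ι] [DecidableEq ι]
    [Field K] [CharZero K] :
    ∑ w : ι → Bool, (-1 : K) ^ #{i | w i = true} / (#{i | w i = true} + 1)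
      = 1 / (Fintype.card ι + 1) := by
  rw [sum_boolFun_apply_card (fun k => (-1 : K) ^ k / (k + 1)), ← sum_choose_mul_neg_one_pow_div]
  simp only [nsmul_eq_mul, mul_div_assoc]

theorem eq_neg_one_pow_card_smul_of_update_add_update {ι M : Type*} [Fintype ι] [DecidableEq ι]
    [AddCommGroup M] (x : (ι → Bool) → M)
    (hx : ∀ (w : ι → Bool) (i : ι),
      x (Function.update w i false) + x (Function.update w i true) = 0)
    (w : ι → Bool) : x w = (-1 : ℤ) ^ #{i | w i = true} • x (fun _ => false) := by
  suffices h : ∀ s : Finset ι,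
      x (fun i => decide (i ∈ s)) = (-1 : ℤ) ^ #s • x (fun _ => false) by
    convert h {i | w i = true} using 2; funext i; simp
  intro s
  induction s using Finset.induction_on with
  | empty => simp
  | insert a s ha ih =>
    have hfalse : Function.update (fun i => decide (i ∈ s)) a false
        = fun i => decide (i ∈ s) := by
      funext i; by_cases hi : i = a <;> simp [Function.update, hi, ha]
    have htrue : Function.update (fun i => decide (i ∈ s)) a true
        = fun i => decide (i ∈ insert a s) := by
      funext i; by_cases hi : i = a <;> simp [Function.update, hi]
    have := hx (fun i => decide (i ∈ s)) a
    rw [hfalse, htrue, ih] at this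
    rw [card_insert_of_notMem ha, pow_succ, mul_neg_one, neg_smul, eq_neg_iff_add_eq_zero,
      add_comm, this]

theorem Finset.sum_div_mul_prod {ι K : Type*} [DecidableEq ι] [Field K] (s : Finset ι)
    (a b : ι → K) (hb : ∀ i ∈ s, b i ≠ 0) :
    (∑ i ∈ s, a i / b i) * ∏ i ∈ s, b i = ∑ i ∈ s, a i * ∏ j ∈ s.erase i, b j := by
  rw [sum_mul]
  refine sum_congr rfl fun i hi => ?_
  rw [← mul_prod_erase s b hi]
  field_simp [hb i hi]

theorem IsFractionRing.sum_algebraMap_div_ne_zero {ι A K L : Type*} [CommRing A] [Field K]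
    [Field L] [Algebra A L] [IsFractionRing A L] (φ : A →+* K) (s : Finset ι) (f g : ι → A)
    (hg : ∀ i ∈ s, φ (g i) ≠ 0) (h : ∑ i ∈ s, φ (f i) / φ (g i) ≠ 0) :
    ∑ i ∈ s, algebraMap A L (f i) / algebraMap A L (g i) ≠ 0 := by
  classical
  intro hL
  have hgL : ∀ i ∈ s, algebraMap A L (g i) ≠ 0 := fun i hi hgi =>
    hg i hi (by rw [(IsFractionRing.injective A L) (hgi.trans (map_zero _).symm), map_zero])
  have hN : ∑ i ∈ s, f i * ∏ j ∈ s.erase i, g j = 0 := by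
    apply IsFractionRing.injective A L
    simp only [map_sum, map_mul, map_prod, map_zero]
    rw [← sum_div_mul_prod s _ _ hgL, hL, zero_mul]
  apply h
  have hK := congrArg φ hN
  simp only [map_sum, map_mul, map_prod, map_zero] at hK
  rw [← sum_div_mul_prod s _ _ hg] at hK
  exact (mul_eq_zero.mp hK).resolve_right (prod_ne_zero_iff.mpr hg)

open MvPolynomial in
theorem sum_neg_one_pow_card_mul_rfA_div_ne_zero (n : ℕ) :
    ∑ w : Fin n → Bool,
      (-1 : FractionRing (MvPolynomial (Fin (n + 1)) ℝ)) ^ #{k | w k = true} *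
        (rfA n / (rfA n + ∑ k ∈ univ.filter (fun k : Fin n => w k = true), rfB n k)) ≠ 0 := by
  have hterm : ∀ w : Fin n → Bool,
      (-1 : FractionRing (MvPolynomial (Fin (n + 1)) ℝ)) ^ #{k | w k = true} *
        (rfA n / (rfA n + ∑ k ∈ univ.filter (fun k : Fin n => w k = true), rfB n k))
      = algebraMap (MvPolynomial (Fin (n + 1)) ℝ) _ ((-1) ^ #{k | w k = true} * X 0)
        / algebraMap (MvPolynomial (Fin (n + 1)) ℝ) _
          (X 0 + ∑ k ∈ univ.filter (fun k : Fin n => w k = true), X k.succ) := by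
    intro w
    simp only [rfA, rfB, map_mul, map_pow, map_neg, map_one, map_add, map_sum, mul_div_assoc]
  simp only [hterm]
  refine IsFractionRing.sum_algebraMap_div_ne_zero (eval fun _ => (1 : ℝ)) _ _ _
    (fun w _ => by simp only [map_add, eval_X, map_sum, sum_const, nsmul_eq_mul]; positivity) ?_
  simp only [map_mul, map_pow, map_neg, map_one, map_add, map_sum, eval_X, mul_one, sum_const,
    nsmul_eq_mul, add_comm (1 : ℝ)]
  rw [Fintype.sum_boolFun_neg_one_pow_card_div]
  positivity

/-- If values `x w` indexed by binary strings `w ∈ {0,1}ⁿ` satisfy all the pair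
equations `x_{u0v} + x_{u1v} = 0` (for every position and surrounding bits)
together with the first-row equation
`Σ_w (a / (a + Σ_{k : wₖ = 1} bₖ)) · x w = 0` over the field of rational
functions in the distinct variables `a, b₁, …, bₙ`, then `x w = 0` for all `w`. -/
theorem linear_system_only_zero_solution (n : ℕ)
    (x : (Fin n → Bool) → FractionRing (MvPolynomial (Fin (n + 1)) ℝ))
    (h1 : ∀ (w : Fin n → Bool) (k : Fin n),
      x (Function.update w k false) + x (Function.update w k true) = 0)
    (h2 : ∑ w : Fin n → Bool,
      (rfA n / (rfA n + ∑ k ∈ Finset.univ.filter (fun k : Fin n => w k = true),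
        rfB n k)) * x w = 0) :
    ∀ w : Fin n → Bool, x w = 0 := by
  have hsign := eq_neg_one_pow_card_smul_of_update_add_update x h1
  have hx0 : x (fun _ => false) = 0 := by
    refine (mul_eq_zero.mp ?_).resolve_left (sum_neg_one_pow_card_mul_rfA_div_ne_zero n)
    rw [sum_mul, ← h2]
    refine sum_congr rfl fun w _ => ?_
    rw [hsign w, zsmul_eq_mul]
    push_cast
    ring
  intro w
  rw [hsign w, hx0, zsmul_zero]
end
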